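/- Let n ≥ 3 and let α₁, …, αₙ ∈ ℤ² with α₁ = (1,0) and αᵢ = (aᵢ, bᵢ), such that aᵢ·bᵢ₊₁ − aᵢ₊₁·bᵢ = ±1 for i = 1, …, n−1. Let k₊ be the number of indices i ∈ {1,…,n−1} with bᵢ ≠ 0, bᵢ₊₁ ≠ 0, and aᵢ/bᵢ < aᵢ₊₁/bᵢ₊₁ as rational numbers, and let k₋ be the number of such indices with aᵢ/bᵢ > aᵢ₊₁/bᵢ₊₁. Then the sum over i = 2, …, n−1 of the signatures of the Maslov matrices θ(α₁, αᵢ, αᵢ₊₁) (with the αᵢ regarded as vectors in ℝ²) equals k₊ − k₋. -/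

import Mathlib

open Matrix

/-- The standard symplectic form on `ℝ²`. -/
def omegaForm (u v : ℝ × ℝ) : ℝ := u.1 * v.2 - u.2 * v.1

/-- The signature of a real `3 × 3` matrix: the number of positive eigenvalues minus
the number of negative eigenvalues (defined to be `0` if the matrix is not symmetric). -/
noncomputable def matSignature (A : Matrix (Fin 3) (Fin 3) ℝ) : ℤ :=
  if h : A.IsHermitian then
    ((Finset.univ.filter (fun i => 0 < h.eigenvalues i)).card : ℤ)
      - ((Finset.univ.filter (fun i => h.eigenvalues i < 0)).card : ℤ)
  else 0

/-- The Maslov matrix `θ(v₁, v₂, v₃)`. -/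
def maslovMatrix (v₁ v₂ v₃ : ℝ × ℝ) : Matrix (Fin 3) (Fin 3) ℝ :=
  !![0, -omegaForm v₁ v₂, omegaForm v₁ v₃;
     -omegaForm v₁ v₂, 0, -omegaForm v₂ v₃;
     omegaForm v₁ v₃, -omegaForm v₂ v₃, 0]

/-- The inclusion `ℤ² → ℝ²`. -/
def toR (v : ℤ × ℤ) : ℝ × ℝ := ((v.1 : ℝ), (v.2 : ℝ))

/-! The Maslov matrix is symmetric and traceless, so its eigenvalues sum to zero; for three
reals summing to zero the number of positive minus the number of negative ones is minus the sign
of their product. Hence the signature of `θ(u, v, w)` is `-sign (det θ)`, and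
`det θ = 2 ω(u,v) ω(u,w) ω(v,w)`. For `u = (1, 0)`, `v = (a, b)`, `w = (a', b')` this is
`2 b b' (a b' - a' b)`, whose sign is that of `a / b - a' / b'`. The index `i = 0` does not
contribute to either count because `α 0` has second coordinate `0`. -/

theorem intCast_sign_eq_ite_sub_ite {R : Type*} [Zero R] [LinearOrder R] (x : R) :
    (SignType.sign x : ℤ) = (if 0 < x then 1 else 0) - (if x < 0 then 1 else 0) := by
  rcases lt_trichotomy x 0 with hx | rfl | hx
  · simp [sign_neg hx, hx, lt_asymm hx]
  · simp
  · simp [sign_pos hx, hx, lt_asymm hx]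

theorem sign_add_sign_add_sign_of_add_add_eq_zero {R : Type*} [CommRing R] [LinearOrder R]
    [IsStrictOrderedRing R] {x y z : R} (h : x + y + z = 0) :
    (SignType.sign x + SignType.sign y + SignType.sign z : ℤ) = -SignType.sign (x * y * z) := by
  simp only [sign_mul, SignType.coe_mul]
  rcases lt_trichotomy x 0 with hx | rfl | hx <;> rcases lt_trichotomy y 0 with hy | rfl | hy <;>
    rcases lt_trichotomy z 0 with hz | rfl | hz <;>
    simp [sign_neg, sign_pos, *] <;> linarith

theorem matSignature_eq_sum_sign {A : Matrix (Fin 3) (Fin 3) ℝ} (hA : A.IsHermitian) :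
    matSignature A = ∑ i, (SignType.sign (hA.eigenvalues i) : ℤ) := by
  simp only [matSignature, dif_pos hA, Finset.natCast_card_filter, intCast_sign_eq_ite_sub_ite,
    Finset.sum_sub_distrib]

theorem matSignature_eq_neg_sign_det {A : Matrix (Fin 3) (Fin 3) ℝ} (hA : A.IsHermitian)
    (htr : A.trace = 0) : matSignature A = -SignType.sign A.det := by
  have hsum : hA.eigenvalues 0 + hA.eigenvalues 1 + hA.eigenvalues 2 = 0 := by
    simpa [Fin.sum_univ_three, htr] using hA.trace_eq_sum_eigenvalues.symm
  rw [matSignature_eq_sum_sign hA, Fin.sum_univ_three, hA.det_eq_prod_eigenvalues,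
    Fin.prod_univ_three, sign_add_sign_add_sign_of_add_add_eq_zero hsum]
  simp

theorem maslovMatrix_isHermitian (u v w : ℝ × ℝ) : (maslovMatrix u v w).IsHermitian := by
  ext i j
  fin_cases i <;> fin_cases j <;> simp [maslovMatrix]

theorem trace_maslovMatrix (u v w : ℝ × ℝ) : (maslovMatrix u v w).trace = 0 := by
  simp [maslovMatrix, Matrix.trace_fin_three]

theorem det_maslovMatrix (u v w : ℝ × ℝ) :
    (maslovMatrix u v w).det = 2 * (omegaForm u v * omegaForm u w * omegaForm v w) := by
  simp [maslovMatrix, Matrix.det_fin_three]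
  ring

theorem matSignature_maslovMatrix (u v w : ℝ × ℝ) :
    matSignature (maslovMatrix u v w) =
      -SignType.sign (omegaForm u v * omegaForm u w * omegaForm v w) := by
  rw [matSignature_eq_neg_sign_det (maslovMatrix_isHermitian u v w) (trace_maslovMatrix u v w),
    det_maslovMatrix, sign_mul, sign_pos two_pos, one_mul]

theorem omegaForm_toR (v w : ℤ × ℤ) :
    omegaForm (toR v) (toR w) = ((v.1 * w.2 - v.2 * w.1 : ℤ) : ℝ) := by
  simp [omegaForm, toR]

theorem matSignature_maslovMatrix_toR (v w : ℤ × ℤ) :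
    matSignature (maslovMatrix (toR (1, 0)) (toR v) (toR w)) =
      -SignType.sign (v.2 * w.2 * (v.1 * w.2 - v.2 * w.1)) := by
  rw [matSignature_maslovMatrix, omegaForm_toR, omegaForm_toR, omegaForm_toR, ← Int.cast_mul,
    ← Int.cast_mul, sign_intCast]
  simp

theorem sign_slope_sub_slope (v w : ℤ × ℤ) (hv : v.2 ≠ 0) (hw : w.2 ≠ 0) :
    SignType.sign ((w.1 : ℚ) / w.2 - (v.1 : ℚ) / v.2) =
      -SignType.sign (v.2 * w.2 * (v.1 * w.2 - v.2 * w.1)) := by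
  have hvw : (0 : ℚ) < ((v.2 * w.2 : ℤ) : ℚ) ^ 2 := by positivity
  have key : ((w.1 : ℚ) / w.2 - (v.1 : ℚ) / v.2) * ((v.2 * w.2 : ℤ) : ℚ) ^ 2 =
      ((-(v.2 * w.2 * (v.1 * w.2 - v.2 * w.1)) : ℤ) : ℚ) := by
    push_cast
    field_simp
    ring
  rw [← Left.sign_neg, ← sign_intCast (α := ℚ), ← key, sign_mul, sign_pos hvw, mul_one]

theorem ite_slope_lt_sub_ite_slope_gt (v w : ℤ × ℤ) :
    ((if v.2 ≠ 0 ∧ w.2 ≠ 0 ∧ (v.1 : ℚ) / v.2 < (w.1 : ℚ) / w.2 then 1 else 0) -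
        (if v.2 ≠ 0 ∧ w.2 ≠ 0 ∧ (w.1 : ℚ) / w.2 < (v.1 : ℚ) / v.2 then 1 else 0) : ℤ) =
      -SignType.sign (v.2 * w.2 * (v.1 * w.2 - v.2 * w.1)) := by
  by_cases hv : v.2 = 0
  · simp [hv]
  by_cases hw : w.2 = 0
  · simp [hw]
  simp only [ne_eq, hv, hw, not_false_eq_true, true_and]
  rw [← SignType.coe_neg, ← sign_slope_sub_slope v w hv hw, intCast_sign_eq_ite_sub_ite]
  simp only [sub_pos, sub_neg]

theorem signature_eq_kplus_sub_kminus_general (n : ℕ) (α : ℕ → ℤ × ℤ)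
    (h1 : α 0 = (1, 0)) :
    (∑ i ∈ Finset.Ico 1 (n - 1),
        matSignature (maslovMatrix (toR (α 0)) (toR (α i)) (toR (α (i + 1)))))
      = (((Finset.range (n - 1)).filter (fun i => (α i).2 ≠ 0 ∧ (α (i + 1)).2 ≠ 0 ∧
            ((α i).1 : ℚ) / ((α i).2 : ℚ) < ((α (i + 1)).1 : ℚ) / ((α (i + 1)).2 : ℚ))).card : ℤ)
        - (((Finset.range (n - 1)).filter (fun i => (α i).2 ≠ 0 ∧ (α (i + 1)).2 ≠ 0 ∧
            ((α (i + 1)).1 : ℚ) / ((α (i + 1)).2 : ℚ) < ((α i).1 : ℚ) / ((α i).2 : ℚ))).card : ℤ) := by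
  rw [Finset.natCast_card_filter, Finset.natCast_card_filter, ← Finset.sum_sub_distrib, h1]
  simp only [ite_slope_lt_sub_ite_slope_gt, matSignature_maslovMatrix_toR]
  refine Finset.sum_subset (fun i hi => by simp at hi ⊢; omega) fun i hi hi' => ?_
  obtain rfl : i = 0 := by simp at hi hi'; omega
  simp [h1]

/-- The signature formula: for `α 0 = (1,0)` and consecutive determinants `±1`,
the sum of the Maslov signatures `μ(α 0, α i, α (i+1))` equals `k₊ - k₋`, where
`k₊` (resp. `k₋`) counts consecutive pairs of slopes that increase (resp.
decrease). -/
theorem signature_eq_kplus_sub_kminus (n : ℕ) (hn : 3 ≤ n) (α : ℕ → ℤ × ℤ)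
    (h1 : α 0 = (1, 0))
    (hdet : ∀ i < n - 1,
      (α i).1 * (α (i + 1)).2 - (α (i + 1)).1 * (α i).2 = 1 ∨
      (α i).1 * (α (i + 1)).2 - (α (i + 1)).1 * (α i).2 = -1) :
    (∑ i ∈ Finset.Ico 1 (n - 1),
        matSignature (maslovMatrix (toR (α 0)) (toR (α i)) (toR (α (i + 1)))))
      = (((Finset.range (n - 1)).filter (fun i => (α i).2 ≠ 0 ∧ (α (i + 1)).2 ≠ 0 ∧
            ((α i).1 : ℚ) / ((α i).2 : ℚ) < ((α (i + 1)).1 : ℚ) / ((α (i + 1)).2 : ℚ))).card : ℤ)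
        - (((Finset.range (n - 1)).filter (fun i => (α i).2 ≠ 0 ∧ (α (i + 1)).2 ≠ 0 ∧
            ((α (i + 1)).1 : ℚ) / ((α (i + 1)).2 : ℚ) < ((α i).1 : ℚ) / ((α i).2 : ℚ))).card : ℤ) :=
  signature_eq_kplus_sub_kminus_general n α h1
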